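/- Let g be a k-snapshot predictor and f* the true conditional distribution function. If g is ε-k-th-order calibrated, i.e., W₁(g(x), proj_k(f*([x]))) ≤ ε for all x, then g is (ε + |Y|/(2√k))-higher-order calibrated, i.e., W₁(g(x), f*([x])) ≤ ε + |Y|/(2√k) for all x. -/

import Mathlib

open MeasureTheory

/-- 1-Wasserstein distance wrt a cost `d`, as the infimum of the expected cost
over all couplings. -/
noncomputable def W1 {α : Type*} [MeasurableSpace α] (d : α → α → ℝ)
    (μ ν : Measure α) : ℝ :=
  sInf {c | ∃ γ : Measure (α × α),
    γ.map Prod.fst = μ ∧ γ.map Prod.snd = ν ∧ c = ∫ q, d q.1 q.2 ∂γ}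

/-- ℓ1 distance between two points of the simplex (as vectors). -/
noncomputable def l1dist {Y : Type*} [Fintype Y] (p q : Y → ℝ) : ℝ :=
  ∑ y, |p y - q y|

/-- The measure on `Y` corresponding to a probability vector `p : Y → ℝ`. -/
noncomputable def measOf {Y : Type*} [Fintype Y] [MeasurableSpace Y] (p : Y → ℝ) :
    Measure Y :=
  ∑ y, ENNReal.ofReal (p y) • Measure.dirac y

/-- The empirical distribution (normalized histogram) of a `k`-tuple of labels. -/
noncomputable def emp {Y : Type*} [Fintype Y] [DecidableEq Y] (k : ℕ)
    (ys : Fin k → Y) : Y → ℝ :=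
  fun j => ((Finset.univ.filter fun i => ys i = j).card : ℝ) / k

/-- The `k`-th order projection of a mixture `π ∈ Δ(Δ(Y))`: draw `p ~ π`, draw `k`
i.i.d. labels from `p`, and output their empirical distribution. -/
noncomputable def projk {Y : Type*} [Fintype Y] [DecidableEq Y] [MeasurableSpace Y]
    [MeasurableSingletonClass Y] (k : ℕ) (π : Measure (Y → ℝ)) : Measure (Y → ℝ) :=
  π.bind fun p => (Measure.pi fun _ : Fin k => measOf p).map (emp k)

open ProbabilityTheory

/-!
By the triangle inequality for `W₁` it suffices to bound `W₁(proj_k π, π)`. Draw `p ~ π` and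
then the empirical distribution `p̂` of `k` i.i.d. samples from `p`: this couples `proj_k π`
with `π` at cost `E ‖p̂ - p‖₁ ≤ ∑_y √(Var p̂_y) = ∑_y √(p_y (1 - p_y) / k) ≤ |Y| / (2√k)`.
The triangle inequality comes from gluing two couplings along their common marginal, which
disintegration makes possible on a standard Borel space.
-/

open Finset
open scoped ENNReal

lemma ENNReal.toReal_le_toReal_add_of_le_add {a b c : ℝ≥0∞} (hab : a ≤ b + c) (hba : b ≤ a + c)
    (hc : c ≠ ∞) : a.toReal ≤ b.toReal + c.toReal := by
  by_cases ha : a = ∞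
  · simp only [ha, ENNReal.toReal_top]
    positivity
  have hb : b ≠ ∞ := ne_top_of_le_ne_top (ENNReal.add_ne_top.2 ⟨ha, hc⟩) hba
  rw [← ENNReal.toReal_add hb hc]
  exact ENNReal.toReal_mono (ENNReal.add_ne_top.2 ⟨hb, hc⟩) hab

lemma exists_measure_map_eq_of_snd_eq_fst {α β γ : Type*} [MeasurableSpace α] [MeasurableSpace β]
    [MeasurableSpace γ] [StandardBorelSpace α] [Nonempty α] [StandardBorelSpace γ] [Nonempty γ]
    {ρ₁ : Measure (α × β)} {ρ₂ : Measure (β × γ)} [IsFiniteMeasure ρ₁] [IsFiniteMeasure ρ₂]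
    (h : ρ₁.snd = ρ₂.fst) :
    ∃ τ : Measure (α × β × γ), τ.map (fun t => (t.1, t.2.1)) = ρ₁ ∧ τ.map Prod.snd = ρ₂ := by
  set A := (ρ₁.map Prod.swap).condKernel
  set B := ρ₂.condKernel
  have hA : ρ₂.fst ⊗ₘ A = ρ₁.map Prod.swap := by
    rw [← h, ← Measure.fst_map_swap, Measure.disintegrate]
  refine ⟨(ρ₂.fst ⊗ₘ (A ×ₖ B)).map (fun u => (u.2.1, u.1, u.2.2)), ?_, ?_⟩
  · have : (fun t : α × β × γ => (t.1, t.2.1)) ∘ (fun u : β × α × γ => (u.2.1, u.1, u.2.2))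
        = Prod.swap ∘ Prod.map id Prod.fst := rfl
    rw [Measure.map_map (by fun_prop) (by fun_prop), this,
      ← Measure.map_map measurable_swap (by fun_prop), ← Measure.compProd_map measurable_fst,
      ← Kernel.fst_eq, Kernel.fst_prod, hA, Measure.map_map measurable_swap measurable_swap,
      Prod.swap_swap_eq, Measure.map_id]
  · have : Prod.snd ∘ (fun u : β × α × γ => (u.2.1, u.1, u.2.2)) = Prod.map id Prod.snd := rfl
    rw [Measure.map_map (by fun_prop) (by fun_prop), this, ← Measure.compProd_map measurable_snd,
      ← Kernel.snd_eq, Kernel.snd_prod, Measure.disintegrate]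

section Wasserstein

variable {α : Type*} [MeasurableSpace α] {d : α → α → ℝ}

lemma W1_nonneg (hd_nonneg : ∀ a b, 0 ≤ d a b) (μ ν : Measure α) : 0 ≤ W1 d μ ν :=
  Real.sInf_nonneg <| by
    rintro _ ⟨γ, -, -, rfl⟩
    exact integral_nonneg fun q => hd_nonneg _ _

lemma W1_zero_right {μ : Measure α} (hμ : μ ≠ 0) : W1 d μ 0 = 0 := by
  rw [W1]
  convert Real.sInf_empty
  refine Set.eq_empty_iff_forall_notMem.2 ?_
  rintro _ ⟨γ, hγμ, hγ0, -⟩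
  rw [Measure.map_eq_zero_iff measurable_snd.aemeasurable] at hγ0
  exact hμ (by rw [← hγμ, hγ0, Measure.map_zero])

/-- The Bochner integral of a non-integrable cost is `0`, so the reverse triangle inequality is
needed to see that the cost of `γ₁` is finite whenever that of the glued coupling is. -/
lemma exists_coupling_integral_le_add [StandardBorelSpace α] [Nonempty α]
    (hd_nonneg : ∀ a b, 0 ≤ d a b) (hd_symm : ∀ a b, d a b = d b a)
    (hd_triangle : ∀ a b c, d a c ≤ d a b + d b c) (hd : Measurable (Function.uncurry d))
    {γ₁ γ₂ : Measure (α × α)} [IsFiniteMeasure γ₁] [IsFiniteMeasure γ₂] (h : γ₁.snd = γ₂.fst)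
    (h₂ : ∫⁻ q, ENNReal.ofReal (d q.1 q.2) ∂γ₂ ≠ ∞) :
    ∃ γ : Measure (α × α), γ.fst = γ₁.fst ∧ γ.snd = γ₂.snd ∧
      ∫ q, d q.1 q.2 ∂γ ≤ ∫ q, d q.1 q.2 ∂γ₁ + ∫ q, d q.1 q.2 ∂γ₂ := by
  obtain ⟨τ, hτ₁, hτ₂⟩ := exists_measure_map_eq_of_snd_eq_fst h
  set c : α × α → ℝ≥0∞ := fun q => ENNReal.ofReal (d q.1 q.2)
  have hc : Measurable c := ENNReal.measurable_ofReal.comp hd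
  have hc_triangle : ∀ a b e, c (a, e) ≤ c (a, b) + c (b, e) := fun a b e =>
    (ENNReal.ofReal_le_ofReal (hd_triangle a b e)).trans ENNReal.ofReal_add_le
  have hL₁ : ∫⁻ q, c q ∂γ₁ = ∫⁻ t, c (t.1, t.2.1) ∂τ := by
    rw [← hτ₁, lintegral_map hc (by fun_prop)]
  have hL₂ : ∫⁻ q, c q ∂γ₂ = ∫⁻ t, c t.2 ∂τ := by
    rw [← hτ₂, lintegral_map hc measurable_snd]
  have hint : ∀ ρ : Measure (α × α), ∫ q, d q.1 q.2 ∂ρ = (∫⁻ q, c q ∂ρ).toReal := fun ρ =>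
    integral_eq_lintegral_of_nonneg_ae (.of_forall fun q => hd_nonneg _ _) hd.aestronglyMeasurable
  refine ⟨τ.map (fun t => (t.1, t.2.2)), ?_, ?_, ?_⟩
  · rw [← hτ₁, Measure.fst_map_prodMk (by fun_prop), Measure.fst_map_prodMk (by fun_prop)]
  · rw [← hτ₂, Measure.snd_map_prodMk (by fun_prop), Measure.snd, Measure.map_map (by fun_prop)
      measurable_snd]
    rfl
  · rw [hint, hint, hint, lintegral_map hc (by fun_prop), hL₁, hL₂]
    refine ENNReal.toReal_le_toReal_add_of_le_add ?_ ?_ (hL₂ ▸ h₂)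
    · exact (lintegral_mono fun t => hc_triangle _ _ _).trans_eq
        (lintegral_add_left (hc.comp (by fun_prop)) _)
    · have hc₁₃ : Measurable fun t : α × α × α => c (t.1, t.2.2) := hc.comp (by fun_prop)
      refine (lintegral_mono fun t => (hc_triangle t.1 t.2.2 t.2.1).trans_eq ?_).trans_eq
        (lintegral_add_left hc₁₃ _)
      simp only [c, hd_symm t.2.2 t.2.1]

lemma W1_snd_le_W1_fst_add_integral [StandardBorelSpace α] [Nonempty α]
    (hd_nonneg : ∀ a b, 0 ≤ d a b) (hd_symm : ∀ a b, d a b = d b a)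
    (hd_triangle : ∀ a b c, d a c ≤ d a b + d b c) (hd : Measurable (Function.uncurry d))
    (μ : Measure α) [IsProbabilityMeasure μ] (κ : Measure (α × α)) [IsProbabilityMeasure κ]
    (hκ : ∫⁻ q, ENNReal.ofReal (d q.1 q.2) ∂κ ≠ ∞) :
    W1 d μ κ.snd ≤ W1 d μ κ.fst + ∫ q, d q.1 q.2 ∂κ := by
  have hbdd : ∀ ν, BddBelow {c | ∃ γ : Measure (α × α),
      γ.map Prod.fst = μ ∧ γ.map Prod.snd = ν ∧ c = ∫ q, d q.1 q.2 ∂γ} := fun ν =>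
    ⟨0, by rintro _ ⟨γ, -, -, rfl⟩; exact integral_nonneg fun q => hd_nonneg _ _⟩
  refine le_of_forall_pos_lt_add fun δ hδ => ?_
  obtain ⟨_, ⟨γ₁, hγ₁μ, hγ₁κ, rfl⟩, hγ₁⟩ := exists_lt_of_csInf_lt
    (⟨_, μ.prod κ.fst, Measure.fst_prod, Measure.snd_prod.trans (by simp), rfl⟩ :
      Set.Nonempty {c | ∃ γ : Measure (α × α),
        γ.map Prod.fst = μ ∧ γ.map Prod.snd = κ.fst ∧ c = ∫ q, d q.1 q.2 ∂γ})
    (lt_add_of_pos_right (W1 d μ κ.fst) hδ)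
  have : IsFiniteMeasure γ₁ :=
    ⟨by rw [← Measure.fst_univ, Measure.fst, hγ₁μ]; exact measure_lt_top μ _⟩
  obtain ⟨γ, hγμ, hγκ, hγ⟩ :=
    exists_coupling_integral_le_add hd_nonneg hd_symm hd_triangle hd hγ₁κ hκ
  calc W1 d μ κ.snd ≤ ∫ q, d q.1 q.2 ∂γ := csInf_le (hbdd _) ⟨γ, hγμ.trans hγ₁μ, hγκ, rfl⟩
    _ < W1 d μ κ.fst + δ + ∫ q, d q.1 q.2 ∂κ := by linarith
    _ = _ := by ring

end Wasserstein

section L1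

variable {Y : Type*} [Fintype Y]

lemma l1dist_nonneg (p q : Y → ℝ) : 0 ≤ l1dist p q :=
  sum_nonneg fun _ _ => abs_nonneg _

lemma l1dist_comm (p q : Y → ℝ) : l1dist p q = l1dist q p :=
  sum_congr rfl fun _ _ => abs_sub_comm _ _

lemma l1dist_triangle (p q r : Y → ℝ) : l1dist p r ≤ l1dist p q + l1dist q r :=
  (sum_le_sum fun _ _ => abs_sub_le _ _ _).trans_eq sum_add_distrib

lemma measurable_l1dist : Measurable (Function.uncurry (l1dist (Y := Y))) := by
  unfold Function.uncurry l1dist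
  fun_prop

end L1

section Moments

variable {Y : Type*} [Fintype Y] {p : Y → ℝ}

lemma Fintype.sum_pi_fin_succ {R : Type*} [AddCommMonoid R] {k : ℕ}
    (F : (Fin (k + 1) → Y) → R) : ∑ ys, F ys = ∑ a, ∑ t : Fin k → Y, F (Fin.cons a t) := by
  rw [← (Fin.consEquiv fun _ => Y).sum_comp, Fintype.sum_prod_type]
  rfl

lemma sum_prod_eq_one (hp : ∑ y, p y = 1) (k : ℕ) : ∑ ys : Fin k → Y, ∏ i, p (ys i) = 1 := by
  rw [← Fintype.sum_pow, hp, one_pow]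

lemma sum_prod_mul_sum (hp : ∑ y, p y = 1) (Z : Y → ℝ) (k : ℕ) :
    ∑ ys : Fin k → Y, (∏ i, p (ys i)) * ∑ i, Z (ys i) = k * ∑ c, p c * Z c := by
  induction k with
  | zero => simp
  | succ k ih =>
    have (a : Y) (t : Fin k → Y) :
        p a * (∏ i, p (t i)) * (Z a + ∑ i, Z (t i))
          = p a * Z a * ∏ i, p (t i) + p a * ((∏ i, p (t i)) * ∑ i, Z (t i)) := by ring
    simp only [Fintype.sum_pi_fin_succ, Fin.prod_univ_succ, Fin.sum_univ_succ, Fin.cons_zero,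
      Fin.cons_succ, this, sum_add_distrib, ← mul_sum, ← sum_mul, ih, sum_prod_eq_one hp, hp]
    push_cast
    ring

lemma sum_prod_mul_sum_sq (hp : ∑ y, p y = 1) {Z : Y → ℝ} (hZ : ∑ c, p c * Z c = 0) (k : ℕ) :
    ∑ ys : Fin k → Y, (∏ i, p (ys i)) * (∑ i, Z (ys i)) ^ 2 = k * ∑ c, p c * Z c ^ 2 := by
  induction k with
  | zero => simp
  | succ k ih =>
    have (a : Y) (t : Fin k → Y) :
        p a * (∏ i, p (t i)) * (Z a + ∑ i, Z (t i)) ^ 2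
          = p a * Z a ^ 2 * ∏ i, p (t i) + 2 * (p a * Z a) * ((∏ i, p (t i)) * ∑ i, Z (t i))
            + p a * ((∏ i, p (t i)) * (∑ i, Z (t i)) ^ 2) := by ring
    simp only [Fintype.sum_pi_fin_succ, Fin.prod_univ_succ, Fin.sum_univ_succ, Fin.cons_zero,
      Fin.cons_succ, this, sum_add_distrib, ← mul_sum, ← sum_mul, ih, sum_prod_mul_sum hp,
      sum_prod_eq_one hp, hZ, hp]
    push_cast
    ring

lemma sum_mul_abs_le_sqrt_sum_mul_sq {ι : Type*} (s : Finset ι) {w : ι → ℝ}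
    (hw : ∀ i ∈ s, 0 ≤ w i) (hw₁ : ∑ i ∈ s, w i = 1) (x : ι → ℝ) :
    ∑ i ∈ s, w i * |x i| ≤ √(∑ i ∈ s, w i * x i ^ 2) := by
  refine Real.le_sqrt_of_sq_le ?_
  have := sum_sq_le_sum_mul_sum_of_sq_le_mul s hw
    (fun i hi => mul_nonneg (hw i hi) (sq_nonneg (x i)))
    (fun i _ => (by rw [mul_pow, sq_abs]; ring : (w i * |x i|) ^ 2 = w i * (w i * x i ^ 2)).le)
  rwa [hw₁, one_mul] at this

variable [DecidableEq Y] {k : ℕ}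

lemma sum_prod_mul_emp_sub_sq (hk : 0 < k) (hp : p ∈ stdSimplex ℝ Y) (y : Y) :
    ∑ ys : Fin k → Y, (∏ i, p (ys i)) * (emp k ys y - p y) ^ 2 = p y * (1 - p y) / k := by
  set Z : Y → ℝ := fun c => (if c = y then 1 else 0) - p y
  have hZ : ∑ c, p c * Z c = 0 := by
    simp [Z, mul_sub, sum_sub_distrib, ← sum_mul, hp.2]
  have hZ2 : ∑ c, p c * Z c ^ 2 = p y * (1 - p y) := by
    have (c : Y) : p c * Z c ^ 2 = (1 - 2 * p y) * (if c = y then p c else 0) + p y ^ 2 * p c := by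
      simp only [Z]
      split_ifs <;> ring
    simp only [this, sum_add_distrib, ← mul_sum, sum_ite_eq', mem_univ, if_true, hp.2]
    ring
  have hemp (ys : Fin k → Y) : emp k ys y - p y = (∑ i, Z (ys i)) / k := by
    simp only [emp, Z, sum_sub_distrib, sum_boole, sum_const, card_univ, Fintype.card_fin,
      nsmul_eq_mul]
    field_simp
  simp only [hemp, div_pow, ← mul_div_assoc, ← sum_div, sum_prod_mul_sum_sq hp.2 hZ, hZ2]
  field_simp

lemma sum_prod_mul_abs_emp_sub_le (hk : 0 < k) (hp : p ∈ stdSimplex ℝ Y) (y : Y) :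
    ∑ ys : Fin k → Y, (∏ i, p (ys i)) * |emp k ys y - p y| ≤ 1 / (2 * √k) := by
  have hk' : (0 : ℝ) < k := Nat.cast_pos.2 hk
  calc ∑ ys : Fin k → Y, (∏ i, p (ys i)) * |emp k ys y - p y|
      ≤ √(p y * (1 - p y) / k) := by
        rw [← sum_prod_mul_emp_sub_sq hk hp y]
        exact sum_mul_abs_le_sqrt_sum_mul_sq _ (fun ys _ => prod_nonneg fun i _ => hp.1 _)
          (sum_prod_eq_one hp.2 k) _
    _ ≤ 1 / (2 * √k) := by
        rw [Real.sqrt_le_left (by positivity), div_pow, mul_pow, Real.sq_sqrt hk'.le,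
          div_le_div_iff₀ hk' (by positivity)]
        nlinarith [sq_nonneg (p y - 1 / 2)]

lemma sum_prod_mul_l1dist_emp_le (hk : 0 < k) (hp : p ∈ stdSimplex ℝ Y) :
    ∑ ys : Fin k → Y, (∏ i, p (ys i)) * l1dist (emp k ys) p ≤ Fintype.card Y / (2 * √k) :=
  calc ∑ ys : Fin k → Y, (∏ i, p (ys i)) * l1dist (emp k ys) p
      = ∑ y, ∑ ys : Fin k → Y, (∏ i, p (ys i)) * |emp k ys y - p y| := by
        simp_rw [l1dist, mul_sum]
        exact sum_comm
    _ ≤ ∑ _y : Y, 1 / (2 * √k) := sum_le_sum fun y _ => sum_prod_mul_abs_emp_sub_le hk hp y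
    _ = Fintype.card Y / (2 * √k) := by
        rw [sum_const, card_univ, nsmul_eq_mul, mul_one_div]

end Moments

section Empirical

variable {Y : Type*} [Fintype Y] [MeasurableSpace Y]

lemma measOf_singleton [MeasurableSingletonClass Y] (p : Y → ℝ) (y : Y) :
    measOf p {y} = ENNReal.ofReal (p y) := by
  rw [measOf, Measure.finsetSum_apply, sum_eq_single y (fun b _ hb => by simp [hb]) (by simp)]
  simp

instance (p : Y → ℝ) : IsFiniteMeasure (measOf p) :=
  ⟨by simp [measOf, Measure.finsetSum_apply]⟩

lemma isProbabilityMeasure_measOf {p : Y → ℝ} (hp : p ∈ stdSimplex ℝ Y) :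
    IsProbabilityMeasure (measOf p) := by
  constructor
  simp [measOf, Measure.finsetSum_apply, ← ENNReal.ofReal_sum_of_nonneg fun y _ => hp.1 y, hp.2]

variable [MeasurableSingletonClass Y]

lemma lintegral_pi_measOf (k : ℕ) (p : Y → ℝ) (F : (Fin k → Y) → ℝ≥0∞) :
    ∫⁻ ys, F ys ∂(Measure.pi fun _ => measOf p) =
      ∑ ys, F ys * ∏ i, ENNReal.ofReal (p (ys i)) := by
  simp [lintegral_fintype, Measure.pi_singleton, measOf_singleton]

variable [DecidableEq Y]

noncomputable def empiricalKernel (k : ℕ) : Kernel (Y → ℝ) (Y → ℝ) where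
  toFun p := (Measure.pi fun _ : Fin k => measOf p).map (emp k)
  measurable' := by
    refine Measure.measurable_of_measurable_coe _ fun A hA => ?_
    simp_rw [Measure.map_apply (measurable_of_countable _) hA,
      ← lintegral_indicator_one (measurable_of_countable (emp k) hA), lintegral_pi_measOf]
    fun_prop

lemma projk_eq_comp (k : ℕ) (π : Measure (Y → ℝ)) : projk k π = empiricalKernel k ∘ₘ π := rfl

lemma lintegral_empiricalKernel (k : ℕ) (p : Y → ℝ) {F : (Y → ℝ) → ℝ≥0∞} (hF : Measurable F) :
    ∫⁻ e, F e ∂(empiricalKernel k p) = ∑ ys, F (emp k ys) * ∏ i, ENNReal.ofReal (p (ys i)) := by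
  rw [empiricalKernel, Kernel.coe_mk, lintegral_map hF (measurable_of_countable _),
    lintegral_pi_measOf]

lemma isProbabilityMeasure_empiricalKernel (k : ℕ) {p : Y → ℝ} (hp : p ∈ stdSimplex ℝ Y) :
    IsProbabilityMeasure (empiricalKernel k p) := by
  have := isProbabilityMeasure_measOf hp
  exact Measure.isProbabilityMeasure_map (measurable_of_countable _).aemeasurable

end Empirical

section Projection

variable {Y : Type*} [Fintype Y] [DecidableEq Y] [MeasurableSpace Y] [MeasurableSingletonClass Y]
  {k : ℕ}

lemma lintegral_l1dist_empiricalKernel_le (hk : 0 < k) {p : Y → ℝ} (hp : p ∈ stdSimplex ℝ Y) :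
    ∫⁻ e, ENNReal.ofReal (l1dist e p) ∂(empiricalKernel k p)
      ≤ ENNReal.ofReal (Fintype.card Y / (2 * √k)) := by
  have hmeas : Measurable fun e => ENNReal.ofReal (l1dist e p) := by
    unfold l1dist
    fun_prop
  have hw (ys : Fin k → Y) : 0 ≤ ∏ i, p (ys i) := prod_nonneg fun i _ => hp.1 _
  rw [lintegral_empiricalKernel k p hmeas]
  refine le_of_eq_of_le ?_ (ENNReal.ofReal_le_ofReal (sum_prod_mul_l1dist_emp_le hk hp))
  rw [ENNReal.ofReal_sum_of_nonneg fun ys _ => mul_nonneg (hw ys) (l1dist_nonneg _ _)]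
  refine sum_congr rfl fun ys _ => ?_
  rw [ENNReal.ofReal_mul (hw ys), ENNReal.ofReal_prod_of_nonneg fun i _ => hp.1 _, mul_comm]

lemma exists_coupling_projk_map (hk : 0 < k) {X : Type*} [MeasurableSpace X] (ν : Measure X)
    [IsProbabilityMeasure ν] {f : X → Y → ℝ} (hf : Measurable f)
    (hfs : ∀ x, f x ∈ stdSimplex ℝ Y) :
    ∃ κ : Measure ((Y → ℝ) × (Y → ℝ)), IsProbabilityMeasure κ ∧
      κ.fst = projk k (ν.map f) ∧ κ.snd = ν.map f ∧
      ∫⁻ q, ENNReal.ofReal (l1dist q.1 q.2) ∂κ ≤ ENNReal.ofReal (Fintype.card Y / (2 * √k)) := by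
  have : IsMarkovKernel ((empiricalKernel k).comap f hf) :=
    ⟨fun x => isProbabilityMeasure_empiricalKernel k (hfs x)⟩
  have hmeas : Measurable fun u : X × (Y → ℝ) => (u.2, f u.1) :=
    measurable_snd.prodMk (hf.comp measurable_fst)
  refine ⟨(ν ⊗ₘ (empiricalKernel k).comap f hf).map fun u => (u.2, f u.1),
    Measure.isProbabilityMeasure_map hmeas.aemeasurable, ?_, ?_, ?_⟩
  · rw [Measure.fst_map_prodMk (by fun_prop), ← Measure.snd, Measure.snd_compProd, projk_eq_comp,
      ← Kernel.comp_deterministic_eq_comap, ← Measure.comp_assoc,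
      Measure.deterministic_comp_eq_map]
  · conv_rhs => rw [← Measure.fst_compProd ν ((empiricalKernel k).comap f hf)]
    rw [Measure.snd_map_prodMk (by fun_prop), Measure.fst, Measure.map_map hf measurable_fst]
    rfl
  · rw [lintegral_map (f := fun q => ENNReal.ofReal (l1dist q.1 q.2))
      (ENNReal.measurable_ofReal.comp measurable_l1dist) hmeas]
    dsimp only
    rw [Measure.lintegral_compProd (f := fun u => ENNReal.ofReal (l1dist u.2 (f u.1)))
      ((ENNReal.measurable_ofReal.comp measurable_l1dist).comp hmeas)]
    calc ∫⁻ x, ∫⁻ e, ENNReal.ofReal (l1dist e (f x)) ∂(empiricalKernel k (f x)) ∂ν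
        ≤ ∫⁻ _, ENNReal.ofReal (Fintype.card Y / (2 * √k)) ∂ν :=
          lintegral_mono fun x => lintegral_l1dist_empiricalKernel_le hk (hfs x)
      _ = _ := by simp

end Projection

/-- **ε-k-th-order calibration implies (ε + |Y|/(2√k))-higher-order calibration.**
If `W₁(g x, proj_k (f*([x]))) ≤ ε` for all `x`, then
`W₁(g x, f*([x])) ≤ ε + |Y|/(2√k)` for all `x`, where `f*([x])` is the Bayes mixture
over the level set of `x`. -/
theorem stmt4 {X Y ι : Type*} [MeasurableSpace X] [Fintype Y] [DecidableEq Y]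
    [MeasurableSpace Y] [MeasurableSingletonClass Y]
    (μ : Measure X) [IsProbabilityMeasure μ]
    (fstar : X → Y → ℝ) (hfstar : Measurable fstar)
    (hfsimp : ∀ x, fstar x ∈ stdSimplex ℝ Y)
    (part : X → ι)
    (k : ℕ) (hk : 0 < k) (ε : ℝ)
    (g : X → Measure (Y → ℝ)) (hprob : ∀ x, IsProbabilityMeasure (g x))
    (hcal : ∀ x, W1 l1dist (g x)
      (projk k ((ProbabilityTheory.cond μ {x' | part x' = part x}).map fstar)) ≤ ε)
    (x : X) :
    W1 l1dist (g x) ((ProbabilityTheory.cond μ {x' | part x' = part x}).map fstar)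
      ≤ ε + (Fintype.card Y : ℝ) / (2 * Real.sqrt k) := by
  set s := {x' | part x' = part x}
  have hB : 0 ≤ (Fintype.card Y : ℝ) / (2 * √k) := by positivity
  have hε : 0 ≤ ε := (W1_nonneg l1dist_nonneg _ _).trans (hcal x)
  by_cases hs : μ s = 0
  · have : (μ[|s]).map fstar = 0 := by
      simp [ProbabilityTheory.cond, Measure.restrict_eq_zero.2 hs]
    rw [this, W1_zero_right (hprob x).ne_zero]
    positivity
  have := cond_isProbabilityMeasure (μ := μ) hs
  have := hprob x
  obtain ⟨κ, _, hκ₁, hκ₂, hκ⟩ := exists_coupling_projk_map hk μ[|s] hfstar hfsimp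
  calc W1 l1dist (g x) ((μ[|s]).map fstar)
      ≤ W1 l1dist (g x) (projk k ((μ[|s]).map fstar)) + ∫ q, l1dist q.1 q.2 ∂κ := by
        rw [← hκ₁, ← hκ₂]
        exact W1_snd_le_W1_fst_add_integral l1dist_nonneg l1dist_comm l1dist_triangle
          measurable_l1dist _ _ (ne_top_of_le_ne_top ENNReal.ofReal_ne_top hκ)
    _ ≤ ε + Fintype.card Y / (2 * √k) := by
        refine add_le_add (hcal x) ?_
        rw [integral_eq_lintegral_of_nonneg_ae (.of_forall fun q => l1dist_nonneg _ _)
          measurable_l1dist.aestronglyMeasurable]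
        exact ENNReal.toReal_le_of_le_ofReal hB hκ
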